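/- Define U(n,a,b,f) = 2^((n + (a+2b)/2 + f/8)/4) for real numbers n, a, b, f. Then for all real n, a, b, f: U(n,a,b,f) < U(n−5, a, b, f−2) + U(n−2, a, b, f−2). -/
import Mathlib


/-- Iwama and Nakashima's candidate function `U(n,a,b,f) = 2^((n + (a+2b)/2 + f/8)/4)`. -/
noncomputable def U (n a b f : ℝ) : ℝ :=
  (2 : ℝ) ^ ((n + (a + 2 * b) / 2 + f / 8) / 4)

lemma pow16_eq (c : ℝ) : ((2:ℝ) ^ c) ^ (16:ℕ) = (2:ℝ) ^ (c * 16) := by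
  rw [← Real.rpow_natCast ((2:ℝ) ^ c) 16, ← Real.rpow_mul (by norm_num)]
  norm_num

lemma h21 : (33/100 : ℝ) < (2:ℝ) ^ (-(21:ℝ)/16) := by
  apply lt_of_pow_lt_pow_left₀ 16 (Real.rpow_nonneg (by norm_num) _)
  rw [pow16_eq]
  have : (-(21:ℝ)/16) * 16 = ((-21 : ℤ) : ℝ) := by norm_num
  rw [this, Real.rpow_intCast]
  norm_num

lemma h9 : (67/100 : ℝ) < (2:ℝ) ^ (-(9:ℝ)/16) := by
  apply lt_of_pow_lt_pow_left₀ 16 (Real.rpow_nonneg (by norm_num) _)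
  rw [pow16_eq]
  have : (-(9:ℝ)/16) * 16 = ((-9 : ℤ) : ℝ) := by norm_num
  rw [this, Real.rpow_intCast]
  norm_num

theorem stmt_8 :
    ∀ n a b f : ℝ, U n a b f < U (n - 5) a b (f - 2) + U (n - 2) a b (f - 2) := by
  intro n a b f
  unfold U
  have hx : ((n-5) + (a+2*b)/2 + (f-2)/8)/4
      = (n + (a+2*b)/2 + f/8)/4 + (-(21:ℝ)/16) := by ring
  have hy : ((n-2) + (a+2*b)/2 + (f-2)/8)/4
      = (n + (a+2*b)/2 + f/8)/4 + (-(9:ℝ)/16) := by ring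
  rw [hx, hy, Real.rpow_add (by norm_num), Real.rpow_add (by norm_num)]
  have ht : (0:ℝ) < (2:ℝ) ^ ((n + (a+2*b)/2 + f/8)/4) :=
    Real.rpow_pos_of_pos (by norm_num) _
  nlinarith [h21, h9, ht]
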